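/- Fix n ∈ ℕ. The map ψ̂ₙ that sends a decomposed semimetric (r,v) on [n] (r a pseudometric on [n], v ∈ ℝ≥0ⁿ) to the isomorphy class of the marked metric measure space ([n]/∼, r, n⁻¹ Σᵢ δ_{([i],v(i))}) — where ∼ identifies points at r-distance zero — is continuous with respect to the Euclidean topology on (r,v) and the marked Gromov-weak topology; more precisely, the Prohorov distance between the marked distance matrix distributions of ψ̂ₙ(r,v) and ψ̂ₙ(r',v') is at most max over i,j ∈ [n] of max(|r(i,j)−r'(i,j)|, |v(i)−v'(i)|). -/

import Mathlib

/-!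
Both marked distance matrix distributions are images of the same measure `μ`, under the maps
sending `ω` to the matrices sampled along the same index sequence `(f i ω)ᵢ`. Every entry of one
sampled matrix is within the entrywise distance `M` of `(r, v)` and `(r', v')` from the
corresponding entry of the other, so the two maps are pointwise within `mdmDist`-distance `M`,
and such a coupling bounds the Prohorov distance by `M`.
-/

open MeasureTheory ProbabilityTheory
open scoped ENNReal

/-- The Prohorov distance of two measures with respect to a distance function `d`. -/
noncomputable def prohorovDist {α : Type*} [MeasurableSpace α]
    (d : α → α → ℝ) (μ ν : Measure α) : ℝ :=
  sInf {ε : ℝ | 0 < ε ∧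
    (∀ F : Set α, μ F ≤ ν {y | ∃ x ∈ F, d x y < ε} + ENNReal.ofReal ε) ∧
    (∀ F : Set α, ν F ≤ μ {y | ∃ x ∈ F, d x y < ε} + ENNReal.ofReal ε)}

/-- The metric on the space of marked distance matrices:
`d((r,v),(r',v')) = sup_k min (max_{i,j ≤ k} max |r(i,j)−r'(i,j)| |v(i)−v'(i)|) 2^{−k}`. -/
noncomputable def mdmDist (y y' : (ℕ → ℕ → ℝ) × (ℕ → ℝ)) : ℝ :=
  ⨆ k : ℕ, min
    ((Finset.range (k + 1)).sup' Finset.nonempty_range_add_one fun i =>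
      (Finset.range (k + 1)).sup' Finset.nonempty_range_add_one fun j =>
        max |y.1 i j - y'.1 i j| |y.2 i - y'.2 i|)
    ((2 : ℝ)⁻¹ ^ k)

lemma min_add_le_min_add_min {a b c : ℝ} (ha : 0 ≤ a) (hb : 0 ≤ b) (hc : 0 ≤ c) :
    min (a + b) c ≤ min a c + min b c := by
  simp only [min_def]
  split_ifs <;> linarith

namespace MarkedDistanceMatrix

abbrev Mdm := (ℕ → ℕ → ℝ) × (ℕ → ℝ)

-- `mdmDist y y'` is definitionally `⨆ k, min (truncDist k y y') (2⁻¹ ^ k)`.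
noncomputable def truncDist (k : ℕ) (y y' : Mdm) : ℝ :=
  (Finset.range (k + 1)).sup' Finset.nonempty_range_add_one fun i =>
    (Finset.range (k + 1)).sup' Finset.nonempty_range_add_one fun j =>
      max |y.1 i j - y'.1 i j| |y.2 i - y'.2 i|

lemma le_truncDist {k i j : ℕ} (hi : i ≤ k) (hj : j ≤ k) (y y' : Mdm) :
    max |y.1 i j - y'.1 i j| |y.2 i - y'.2 i| ≤ truncDist k y y' :=
  Finset.le_sup'_of_le _ (Finset.mem_range_succ_iff.2 hi)
    (Finset.le_sup'_of_le _ (Finset.mem_range_succ_iff.2 hj) le_rfl)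

lemma truncDist_le_iff {k : ℕ} {y y' : Mdm} {c : ℝ} :
    truncDist k y y' ≤ c ↔ ∀ i ≤ k, ∀ j ≤ k, max |y.1 i j - y'.1 i j| |y.2 i - y'.2 i| ≤ c := by
  simp only [truncDist, Finset.sup'_le_iff, Finset.mem_range_succ_iff]

lemma truncDist_nonneg (k : ℕ) (y y' : Mdm) : 0 ≤ truncDist k y y' :=
  (by positivity : (0 : ℝ) ≤ _).trans (le_truncDist le_rfl le_rfl y y')

lemma truncDist_mono {k K : ℕ} (h : k ≤ K) (y y' : Mdm) :
    truncDist k y y' ≤ truncDist K y y' :=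
  truncDist_le_iff.2 fun _ hi _ hj => le_truncDist (hi.trans h) (hj.trans h) y y'

lemma truncDist_triangle (k : ℕ) (x y z : Mdm) :
    truncDist k x z ≤ truncDist k x y + truncDist k y z := by
  refine truncDist_le_iff.2 fun i hi j hj => ?_
  have hxy := le_truncDist hi hj x y
  have hyz := le_truncDist hi hj y z
  rw [max_le_iff] at hxy hyz ⊢
  exact ⟨(abs_sub_le _ _ _).trans (add_le_add hxy.1 hyz.1),
    (abs_sub_le _ _ _).trans (add_le_add hxy.2 hyz.2)⟩

lemma continuous_truncDist (k : ℕ) (y : Mdm) : Continuous (truncDist k y) := by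
  refine Continuous.finset_sup'_apply _ fun i _ => Continuous.finset_sup'_apply _ fun j _ => ?_
  exact ((continuous_const.sub ((continuous_apply_apply i j).comp continuous_fst)).abs).max
    (continuous_const.sub ((continuous_apply i).comp continuous_snd)).abs

lemma bddAbove_range_min_truncDist (y y' : Mdm) :
    BddAbove (Set.range fun k : ℕ => min (truncDist k y y') ((2 : ℝ)⁻¹ ^ k)) :=
  ⟨1, Set.forall_mem_range.2 fun _ =>
    (min_le_right _ _).trans (pow_le_one₀ (by norm_num) (by norm_num))⟩

lemma mdmDist_le_of_forall_le {y y' : Mdm} {M : ℝ}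
    (h : ∀ i j, max |y.1 i j - y'.1 i j| |y.2 i - y'.2 i| ≤ M) : mdmDist y y' ≤ M :=
  ciSup_le fun _ => (min_le_left _ _).trans (truncDist_le_iff.2 fun i _ j _ => h i j)

lemma mdmDist_self_nonpos (y : Mdm) : mdmDist y y ≤ 0 :=
  mdmDist_le_of_forall_le fun _ _ => by simp

lemma mdmDist_comm (y y' : Mdm) : mdmDist y y' = mdmDist y' y := by
  simp only [mdmDist, abs_sub_comm]

lemma mdmDist_triangle (x y z : Mdm) : mdmDist x z ≤ mdmDist x y + mdmDist y z := by
  refine ciSup_le fun k => ?_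
  calc min (truncDist k x z) ((2 : ℝ)⁻¹ ^ k)
      ≤ min (truncDist k x y + truncDist k y z) ((2 : ℝ)⁻¹ ^ k) :=
        min_le_min_right _ (truncDist_triangle k x y z)
    _ ≤ min (truncDist k x y) ((2 : ℝ)⁻¹ ^ k) + min (truncDist k y z) ((2 : ℝ)⁻¹ ^ k) :=
        min_add_le_min_add_min (truncDist_nonneg _ _ _) (truncDist_nonneg _ _ _) (by positivity)
    _ ≤ mdmDist x y + mdmDist y z :=
        add_le_add (le_ciSup (bddAbove_range_min_truncDist x y) k)
          (le_ciSup (bddAbove_range_min_truncDist y z) k)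

lemma mdmDist_le_max_truncDist (K : ℕ) (y y' : Mdm) :
    mdmDist y y' ≤ max (truncDist K y y') ((2 : ℝ)⁻¹ ^ K) := by
  refine ciSup_le fun k => ?_
  rcases le_total k K with h | h
  · exact (min_le_left _ _).trans ((truncDist_mono h y y').trans (le_max_left _ _))
  · exact (min_le_right _ _).trans
      ((pow_le_pow_of_le_one (by norm_num) (by norm_num) h).trans (le_max_right _ _))

lemma isOpen_setOf_mdmDist_lt (x : Mdm) (δ : ℝ) : IsOpen {y : Mdm | mdmDist x y < δ} := by
  refine isOpen_iff_mem_nhds.2 fun y hy => ?_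
  obtain ⟨K, hK⟩ : ∃ K : ℕ, (2 : ℝ)⁻¹ ^ K < δ - mdmDist x y :=
    exists_pow_lt_of_lt_one (sub_pos.2 hy) (by norm_num)
  have hy_mem : truncDist K y y < δ - mdmDist x y :=
    (truncDist_le_iff.2 fun _ _ _ _ => by simp).trans_lt ((by positivity : (0 : ℝ) ≤ _).trans_lt hK)
  filter_upwards [(isOpen_lt (continuous_truncDist K y) continuous_const).mem_nhds hy_mem]
    with y' hy'
  have hyy' := (mdmDist_le_max_truncDist K y y').trans_lt (max_lt hy' hK)
  linarith [mdmDist_triangle x y y']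

end MarkedDistanceMatrix

open MarkedDistanceMatrix

lemma map_apply_le_map_setOf_mdmDist_lt_add {Ω : Type*} [MeasurableSpace Ω] (μ : Measure Ω)
    {g g' : Ω → Mdm} (hg : Measurable g) (hg' : Measurable g') {M ε : ℝ} (hMε : M < ε)
    (hd : ∀ ω, mdmDist (g ω) (g' ω) ≤ M) (F : Set Mdm) :
    μ.map g F ≤ μ.map g' {y | ∃ x ∈ F, mdmDist x y < ε} + ENNReal.ofReal ε := by
  -- `F` need not be measurable, so pass to the open set `G ⊇ F`, which `g` maps into the
  -- `ε`-neighbourhood of `F` seen by `g'`.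
  set G : Set Mdm := ⋃ x ∈ F, {y | mdmDist x y < ε - M}
  have hFG : F ⊆ G := fun x hx =>
    Set.mem_biUnion hx ((mdmDist_self_nonpos x).trans_lt (sub_pos.2 hMε))
  have hG : g ⁻¹' G ⊆ g' ⁻¹' {y | ∃ x ∈ F, mdmDist x y < ε} := by
    intro ω hω
    obtain ⟨x, hxF, hx : mdmDist x (g ω) < ε - M⟩ := Set.mem_iUnion₂.1 hω
    exact ⟨x, hxF, by linarith [mdmDist_triangle x (g ω) (g' ω), hd ω]⟩
  have hG_open : IsOpen G := isOpen_biUnion fun x _ => isOpen_setOf_mdmDist_lt x _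
  calc μ.map g F ≤ μ.map g G := measure_mono hFG
    _ = μ (g ⁻¹' G) := Measure.map_apply hg hG_open.measurableSet
    _ ≤ μ (g' ⁻¹' {y | ∃ x ∈ F, mdmDist x y < ε}) := measure_mono hG
    _ ≤ μ.map g' {y | ∃ x ∈ F, mdmDist x y < ε} := Measure.le_map_apply hg'.aemeasurable _
    _ ≤ _ := le_self_add

lemma prohorovDist_map_le_of_forall_mdmDist_le {Ω : Type*} [MeasurableSpace Ω] (μ : Measure Ω)
    {g g' : Ω → Mdm} (hg : Measurable g) (hg' : Measurable g') {M : ℝ} (hM : 0 ≤ M)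
    (hd : ∀ ω, mdmDist (g ω) (g' ω) ≤ M) :
    prohorovDist mdmDist (μ.map g) (μ.map g') ≤ M := by
  have hd' : ∀ ω, mdmDist (g' ω) (g ω) ≤ M := fun ω => (mdmDist_comm _ _).trans_le (hd ω)
  rw [prohorovDist, ← csInf_Ioi (a := M)]
  refine csInf_le_csInf ⟨0, fun _ hε => hε.1.le⟩ Set.nonempty_Ioi fun ε (hε : M < ε) => ?_
  exact ⟨hM.trans_lt hε, map_apply_le_map_setOf_mdmDist_lt_add μ hg hg' hε hd,
    map_apply_le_map_setOf_mdmDist_lt_add μ hg' hg hε hd'⟩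

lemma measurable_sampledMdm {α Ω : Type*} [MeasurableSpace α] [Countable α]
    [MeasurableSingletonClass α] [MeasurableSpace Ω] (R : α → α → ℝ) (V : α → ℝ)
    {f : ℕ → Ω → α} (hf : ∀ i, Measurable (f i)) :
    Measurable fun ω => ((fun i j => R (f i ω) (f j ω), fun i => V (f i ω)) : Mdm) := by
  refine .prod (measurable_pi_lambda _ fun i => measurable_pi_lambda _ fun j => ?_)
    (measurable_pi_lambda _ fun i => (measurable_of_countable V).comp (hf i))
  exact (measurable_of_countable fun p : α × α => R p.1 p.2).comp ((hf i).prodMk (hf j))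

theorem stmt12_general {n : ℕ} [NeZero n]
    {Ω : Type*} [MeasurableSpace Ω] (μ : Measure Ω)
    (r r' : Fin n → Fin n → ℝ) (v v' : Fin n → ℝ)
    (f : ℕ → Ω → Fin n) (hf : ∀ i, Measurable (f i)) :
    prohorovDist mdmDist
      (Measure.map (fun ω =>
        ((fun i j => r (f i ω) (f j ω), fun i => v (f i ω)) : (ℕ → ℕ → ℝ) × (ℕ → ℝ))) μ)
      (Measure.map (fun ω =>
        ((fun i j => r' (f i ω) (f j ω), fun i => v' (f i ω)) : (ℕ → ℕ → ℝ) × (ℕ → ℝ))) μ)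
    ≤ Finset.univ.sup' Finset.univ_nonempty fun i : Fin n =>
        Finset.univ.sup' Finset.univ_nonempty fun j : Fin n =>
          max |r i j - r' i j| |v i - v' i| := by
  have hentry : ∀ a b : Fin n, max |r a b - r' a b| |v a - v' a| ≤
      Finset.univ.sup' Finset.univ_nonempty fun i : Fin n =>
        Finset.univ.sup' Finset.univ_nonempty fun j : Fin n =>
          max |r i j - r' i j| |v i - v' i| := fun a b =>
    Finset.le_sup'_of_le _ (Finset.mem_univ a) (Finset.le_sup'_of_le _ (Finset.mem_univ b) le_rfl)
  exact prohorovDist_map_le_of_forall_mdmDist_le μ (measurable_sampledMdm r v hf)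
    (measurable_sampledMdm r' v' hf) ((by positivity : (0 : ℝ) ≤ _).trans (hentry 0 0))
    fun ω => mdmDist_le_of_forall_le fun i j => hentry (f i ω) (f j ω)

/-- The map `ψ̂ₙ` is continuous: the Prohorov distance between the marked distance matrix
distributions of `ψ̂ₙ(r,v)` and `ψ̂ₙ(r',v')` (laws of the matrices sampled along an i.i.d.
uniform sequence of indices of `[n]`) is bounded by
`max_{i,j} max (|r(i,j)−r'(i,j)|) (|v(i)−v'(i)|)`. -/
theorem stmt12 {n : ℕ} [NeZero n]
    {Ω : Type*} [MeasurableSpace Ω] (μ : Measure Ω) [IsProbabilityMeasure μ]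
    (r r' : Fin n → Fin n → ℝ) (v v' : Fin n → ℝ)
    (hr : (∀ i, r i i = 0) ∧ (∀ i j, 0 ≤ r i j) ∧ (∀ i j, r i j = r j i) ∧
      ∀ i j k, r i k ≤ r i j + r j k)
    (hr' : (∀ i, r' i i = 0) ∧ (∀ i j, 0 ≤ r' i j) ∧ (∀ i j, r' i j = r' j i) ∧
      ∀ i j k, r' i k ≤ r' i j + r' j k)
    (hv : ∀ i, 0 ≤ v i) (hv' : ∀ i, 0 ≤ v' i)
    (f : ℕ → Ω → Fin n) (hf : ∀ i, Measurable (f i))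
    (hiid : iIndepFun f μ)
    (hlaw : ∀ i, Measure.map (f i) μ = (PMF.uniformOfFintype (Fin n)).toMeasure) :
    prohorovDist mdmDist
      (Measure.map (fun ω =>
        ((fun i j => r (f i ω) (f j ω), fun i => v (f i ω)) : (ℕ → ℕ → ℝ) × (ℕ → ℝ))) μ)
      (Measure.map (fun ω =>
        ((fun i j => r' (f i ω) (f j ω), fun i => v' (f i ω)) : (ℕ → ℕ → ℝ) × (ℕ → ℝ))) μ)
    ≤ Finset.univ.sup' Finset.univ_nonempty fun i : Fin n =>
        Finset.univ.sup' Finset.univ_nonempty fun j : Fin n =>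
          max |r i j - r' i j| |v i - v' i| :=
  stmt12_general μ r r' v v' f hf
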